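/- Let S be a finite type and P a row-stochastic matrix on S, with residual coupling matrix Q indexed by S × S (defined via κ(x,y) = ∑_z min(P(x,z),P(y,z)) by Q((x,y),(x',y')) = (P(x,x') − min(P(x,x'),P(y,x')))·(P(y,y') − min(P(x,y'),P(y,y')))/(1 − κ(x,y)) for x ≠ y with κ(x,y) < 1, and 0 otherwise). Let r(Q) denote the spectral radius of Q, i.e., the largest modulus of a complex eigenvalue of Q. Then for every ε > 0 there exists N ∈ ℕ such that for all n ≥ N and all probability vectors μ, ν on S: ∑_x |(μPⁿ)(x) − (νPⁿ)(x)| ≤ (r(Q) + ε)ⁿ · ∑_x |μ(x) − ν(x)|. -/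

import Mathlib

open Finset

variable {S : Type*} [Fintype S] [DecidableEq S]

/-- The overlap coefficient `κ(x,y) = ∑_z min(P(x,z), P(y,z))` of a transition matrix. -/
noncomputable def overlap (P : S → S → ℝ) (x y : S) : ℝ := ∑ z, min (P x z) (P y z)

/-- The residual coupling matrix `Q` of a transition matrix `P`. -/
noncomputable def residualQ (P : S → S → ℝ) : Matrix (S × S) (S × S) ℝ :=
  Matrix.of fun p p' =>
    if p.1 ≠ p.2 ∧ overlap P p.1 p.2 < 1 then
      (P p.1 p'.1 - min (P p.1 p'.1) (P p.2 p'.1)) *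
        (P p.2 p'.2 - min (P p.1 p'.2) (P p.2 p'.2)) / (1 - overlap P p.1 p.2)
    else 0

/-- The spectral radius of a real square matrix: the largest modulus of a complex
eigenvalue. -/
noncomputable def specRad {I : Type*} [Fintype I] [DecidableEq I]
    (A : Matrix I I ℝ) : ℝ :=
  sSup {r : ℝ | ∃ c ∈ spectrum ℂ (A.map (Complex.ofReal ·)), r = ‖c‖}

/-!
Write `Dₙ(x, y)` for the ℓ¹ distance between rows `x` and `y` of `Pⁿ`. Rows `x` and `y` of `P`
differ by `a - b`, where `a = P(x, ·) - min(P(x, ·), P(y, ·))` and `b` is the symmetric residual;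
both have mass `1 - κ(x, y)`. Coupling them through the product `a ⊗ b / (1 - κ)`, the triangle
inequality gives `Dₙ₊₁ ≤ Q Dₙ` entrywise, hence `Dₙ ≤ Qⁿ D₀ ≤ 2 ‖Qⁿ‖`. The same coupling applied
to the positive and negative parts of `μ - ν` bounds `‖(μ - ν) Pⁿ‖₁` by `½ maxₚ Dₙ(p) ‖μ - ν‖₁`.
Finally, Gelfand's formula makes `‖Qⁿ‖ ≤ (r(Q) + ε)ⁿ` for large `n`.
-/

open Matrix Filter

attribute [local instance] Matrix.linftyOpNormedAddCommGroup Matrix.linftyOpNormedRing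
  Matrix.linftyOpNormedAlgebra

section RowDistance

variable {ι ι' : Type*} [Fintype ι']

def rowDist (A : Matrix ι ι' ℝ) (p : ι × ι) : ℝ := ∑ z, |A p.1 z - A p.2 z|

theorem rowDist_nonneg (A : Matrix ι ι' ℝ) (p : ι × ι) : 0 ≤ rowDist A p :=
  sum_nonneg fun _ _ => abs_nonneg _

variable [Fintype ι]

theorem norm_rowDist_one_le_two [DecidableEq ι] : ‖rowDist (1 : Matrix ι ι ℝ)‖ ≤ 2 := by
  refine (pi_norm_le_iff_of_nonneg zero_le_two).2 fun p => ?_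
  rw [Real.norm_of_nonneg (rowDist_nonneg _ p)]
  calc rowDist (1 : Matrix ι ι ℝ) p
      ≤ ∑ z, (|(1 : Matrix ι ι ℝ) p.1 z| + |(1 : Matrix ι ι ℝ) p.2 z|) :=
        sum_le_sum fun z _ => abs_sub _ _
    _ = 2 := by norm_num [sum_add_distrib, one_apply, abs_ite]

theorem rowDist_mul (M : Matrix ι ι ℝ) (A : Matrix ι ι' ℝ) (p : ι × ι) :
    rowDist (M * A) p = ∑ z, |((M p.1 - M p.2) ᵥ* A) z| := by
  simp only [rowDist, sub_vecMul]
  rfl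

/-- The coupling `a ⊗ b / t` of two nonnegative vectors of equal mass `t`. If `t = 0`, both vectors
vanish and the junk value `x / 0 = 0` makes the right-hand side `0` as well. -/
theorem sum_abs_vecMul_sub_le (A : Matrix ι ι' ℝ) {a b : ι → ℝ} (ha : 0 ≤ a) (hb : 0 ≤ b)
    (hab : ∑ i, a i = ∑ i, b i) :
    ∑ z, |((a - b) ᵥ* A) z| ≤ ∑ x, ∑ y, a x * b y / (∑ i, b i) * rowDist A (x, y) := by
  set t := ∑ i, b i
  obtain ht | ht := (Fintype.sum_nonneg hb : 0 ≤ t).eq_or_lt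
  · have hb0 : b = 0 := (Fintype.sum_eq_zero_iff_of_nonneg hb).1 ht.symm
    have ha0 : a = 0 := (Fintype.sum_eq_zero_iff_of_nonneg ha).1 (hab.trans ht.symm)
    simp [ha0, hb0]
  have hcoupling (z : ι') : t * ((a - b) ᵥ* A) z = ∑ x, ∑ y, a x * b y * (A x z - A y z) :=
    calc t * ((a - b) ᵥ* A) z
        = (∑ x, a x * A x z) * (∑ y, b y) - (∑ x, a x) * (∑ y, b y * A y z) := by
          rw [hab, sub_vecMul]; simp only [Pi.sub_apply, vecMul, dotProduct]; ring
      _ = ∑ x, ∑ y, a x * b y * (A x z - A y z) := by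
          rw [sum_mul_sum, sum_mul_sum, ← sum_sub_distrib]
          refine sum_congr rfl fun x _ => ?_
          rw [← sum_sub_distrib]
          exact sum_congr rfl fun y _ => by ring
  calc ∑ z, |((a - b) ᵥ* A) z|
      = (∑ z, |∑ x, ∑ y, a x * b y * (A x z - A y z)|) / t := by
        rw [eq_div_iff ht.ne', sum_mul]
        refine sum_congr rfl fun z _ => ?_
        rw [← hcoupling, abs_mul, abs_of_pos ht, mul_comm]
    _ ≤ (∑ z, ∑ x, ∑ y, a x * b y * |A x z - A y z|) / t := by
        gcongr with z
        refine (abs_sum_le_sum_abs _ _).trans <|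
          sum_le_sum fun x _ => (abs_sum_le_sum_abs _ _).trans_eq ?_
        simp only [abs_mul, abs_of_nonneg (ha x), abs_of_nonneg (hb _)]
    _ = ∑ x, ∑ y, a x * b y / t * rowDist A (x, y) := by
        simp only [rowDist, sum_div, mul_sum]
        rw [sum_comm]
        refine sum_congr rfl fun x _ => ?_
        rw [sum_comm]
        refine sum_congr rfl fun y _ => sum_congr rfl fun z _ => by ring

theorem sum_abs_vecMul_le_of_sum_eq_zero (A : Matrix ι ι' ℝ) {c : ι → ℝ} (hc : ∑ i, c i = 0)
    {B : ℝ} (hB : ∀ p, rowDist A p ≤ 2 * B) : ∑ z, |(c ᵥ* A) z| ≤ B * ∑ i, |c i| := by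
  have hsum : ∑ i, c⁺ i = ∑ i, c⁻ i := by
    rw [← sub_eq_zero, ← sum_sub_distrib, ← hc]
    exact sum_congr rfl fun i _ => congrFun (posPart_sub_negPart c) i
  have habs : ∑ i, |c i| = ∑ i, c⁺ i + ∑ i, c⁻ i := by
    rw [← sum_add_distrib]
    exact sum_congr rfl fun i _ => (congrFun (posPart_add_negPart c) i).symm
  calc ∑ z, |(c ᵥ* A) z| = ∑ z, |((c⁺ - c⁻) ᵥ* A) z| := by rw [posPart_sub_negPart]
    _ ≤ ∑ x, ∑ y, c⁺ x * c⁻ y / (∑ i, c⁻ i) * rowDist A (x, y) :=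
        sum_abs_vecMul_sub_le A (posPart_nonneg c) (negPart_nonneg c) hsum
    _ ≤ ∑ x, ∑ y, c⁺ x * c⁻ y / (∑ i, c⁻ i) * (2 * B) := by
        gcongr with x _ y _
        · exact div_nonneg (mul_nonneg (posPart_nonneg c x) (negPart_nonneg c y))
            (sum_nonneg fun i _ => negPart_nonneg c i)
        · exact hB _
    _ = B * ∑ i, |c i| := by
        simp_rw [← sum_mul, ← sum_div, ← sum_mul_sum, habs, hsum, mul_self_div_self]
        ring

end RowDistance

theorem iterate_vecMul {ι R : Type*} [Fintype ι] [DecidableEq ι] [Semiring R]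
    (A : Matrix ι ι R) (n : ℕ) (v : ι → R) : (fun w => w ᵥ* A)^[n] v = v ᵥ* A ^ n := by
  induction n with
  | zero => simp
  | succ n ih => rw [Function.iterate_succ_apply', ih, vecMul_vecMul, pow_succ]

section SpectralRadius

theorem linfty_opNorm_map_ofReal {ι ι' : Type*} [Fintype ι] [Fintype ι'] (A : Matrix ι ι' ℝ) :
    ‖A.map (Complex.ofReal ·)‖ = ‖A‖ := by
  simp [linfty_opNorm_def]

theorem eventually_norm_pow_le_of_spectralRadius_lt {A : Type*} [NormedRing A]
    [NormedAlgebra ℂ A] [CompleteSpace A] (a : A) {r : ℝ}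
    (h : spectralRadius ℂ a < ENNReal.ofReal r) : ∀ᶠ n in atTop, ‖a ^ n‖ ≤ r ^ n := by
  have hr : 0 < r := ENNReal.ofReal_pos.1 (pos_of_gt h)
  filter_upwards [(spectrum.pow_norm_pow_one_div_tendsto_nhds_spectralRadius a).eventually_lt_const
    h, eventually_ne_atTop 0] with n hn hn0
  rw [ENNReal.ofReal_lt_ofReal_iff hr, one_div] at hn
  calc ‖a ^ n‖ = (‖a ^ n‖ ^ (n⁻¹ : ℝ)) ^ n :=
        (Real.rpow_inv_natCast_pow (norm_nonneg _) hn0).symm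
    _ ≤ r ^ n := pow_le_pow_left₀ (by positivity) hn.le n

variable {ι : Type*} [Fintype ι] [DecidableEq ι]

theorem spectralRadius_le_ofReal_specRad (A : Matrix ι ι ℝ) :
    spectralRadius ℂ (A.map (Complex.ofReal ·)) ≤ ENNReal.ofReal (specRad A) := by
  refine iSup₂_le fun k hk => ?_
  rw [← enorm_eq_nnnorm, ← ofReal_norm]
  refine ENNReal.ofReal_le_ofReal (le_csSup ⟨‖A.map (Complex.ofReal ·)‖ * ‖(1 : Matrix ι ι ℂ)‖, ?_⟩
    ⟨k, hk, rfl⟩)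
  rintro _ ⟨c, hc, rfl⟩
  exact spectrum.norm_le_norm_mul_of_mem hc

theorem specRad_nonneg (A : Matrix ι ι ℝ) : 0 ≤ specRad A :=
  Real.sSup_nonneg fun _ ⟨_, _, hr⟩ => hr ▸ norm_nonneg _

theorem eventually_norm_pow_le_specRad_add (A : Matrix ι ι ℝ) {ε : ℝ} (hε : 0 < ε) :
    ∀ᶠ n in atTop, ‖A ^ n‖ ≤ (specRad A + ε) ^ n := by
  have hlt : spectralRadius ℂ (A.map (Complex.ofReal ·)) < ENNReal.ofReal (specRad A + ε) :=
    (spectralRadius_le_ofReal_specRad A).trans_lt <|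
      (ENNReal.ofReal_lt_ofReal_iff (by linarith [specRad_nonneg A])).2 (lt_add_of_pos_right _ hε)
  filter_upwards [eventually_norm_pow_le_of_spectralRadius_lt _ hlt] with n hn
  rw [← linfty_opNorm_map_ofReal]
  exact (congrArg norm (Matrix.map_pow A Complex.ofRealHom n)).trans_le hn

end SpectralRadius

section Coupling

variable {α : Type*} (P : α → α → ℝ)

def residualRow (x y z : α) : ℝ := P x z - min (P x z) (P y z)

theorem residualRow_nonneg (x y : α) : 0 ≤ residualRow P x y :=
  fun _ => sub_nonneg.2 (min_le_left _ _)

theorem residualRow_sub_residualRow (x y : α) :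
    residualRow P x y - residualRow P y x = P x - P y := by
  ext z
  simp only [residualRow, Pi.sub_apply, min_comm (P y z)]
  ring

variable [Fintype α]

theorem overlap_comm (x y : α) : overlap P x y = overlap P y x := by
  simp only [overlap, min_comm]

variable {P}

theorem sum_residualRow (hP1 : ∀ x, ∑ y, P x y = 1) (x y : α) :
    ∑ z, residualRow P x y z = 1 - overlap P x y := by
  simp only [residualRow, sum_sub_distrib, hP1, overlap]

theorem overlap_le_one (hP1 : ∀ x, ∑ y, P x y = 1) (x y : α) : overlap P x y ≤ 1 :=
  (sum_le_sum fun _ _ => min_le_left _ _).trans (hP1 x).le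

variable [DecidableEq α]

/-- Both degenerate branches of `residualQ` agree with this formula: for `x = y` the residual row
vanishes, and otherwise `κ(x, y) = 1`, so the junk value `x / 0 = 0` applies. -/
theorem residualQ_apply (hP1 : ∀ x, ∑ y, P x y = 1) (x y x' y' : α) :
    residualQ P (x, y) (x', y') =
      residualRow P x y x' * residualRow P y x y' / (1 - overlap P x y) := by
  simp only [residualQ, of_apply, residualRow, min_comm (P y y')]
  split_ifs with h
  · rfl
  · obtain rfl | hxy := eq_or_ne x y
    · simp
    · rw [le_antisymm (overlap_le_one hP1 x y) (not_lt.1 fun h' => h ⟨hxy, h'⟩), sub_self,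
        div_zero]

theorem residualQ_nonneg (hP1 : ∀ x, ∑ y, P x y = 1) (p q : α × α) : 0 ≤ residualQ P p q := by
  rw [residualQ_apply hP1]
  exact div_nonneg (mul_nonneg (residualRow_nonneg P _ _ _) (residualRow_nonneg P _ _ _))
    (sub_nonneg.2 (overlap_le_one hP1 _ _))

theorem rowDist_pow_succ_le (hP1 : ∀ x, ∑ y, P x y = 1) (n : ℕ) :
    rowDist (of P ^ (n + 1)) ≤ residualQ P *ᵥ rowDist (of P ^ n) := by
  rintro ⟨x, y⟩
  rw [pow_succ', rowDist_mul]
  change ∑ z, |((P x - P y) ᵥ* _) z| ≤ _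
  rw [← residualRow_sub_residualRow]
  refine (sum_abs_vecMul_sub_le _ (residualRow_nonneg P x y) (residualRow_nonneg P y x)
    (by rw [sum_residualRow hP1, sum_residualRow hP1, overlap_comm])).trans_eq ?_
  simp only [mulVec, dotProduct, Fintype.sum_prod_type, residualQ_apply hP1, sum_residualRow hP1,
    overlap_comm P y x]

theorem rowDist_pow_le (hP1 : ∀ x, ∑ y, P x y = 1) (n : ℕ) (p : α × α) :
    rowDist (of P ^ n) p ≤ 2 * ‖residualQ P ^ n‖ := by
  have hmono : rowDist (of P ^ n) ≤ residualQ P ^ n *ᵥ rowDist (1 : Matrix α α ℝ) := by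
    induction n with
    | zero => simp
    | succ n ih =>
      refine (rowDist_pow_succ_le hP1 n).trans fun q => ?_
      rw [pow_succ', ← mulVec_mulVec]
      exact dotProduct_le_dotProduct_of_nonneg_left ih (residualQ_nonneg hP1 q)
  calc rowDist (of P ^ n) p ≤ ‖residualQ P ^ n *ᵥ rowDist (1 : Matrix α α ℝ)‖ :=
        (hmono p).trans ((Real.le_norm_self _).trans (norm_le_pi_norm _ p))
    _ ≤ ‖residualQ P ^ n‖ * 2 := (linfty_opNorm_mulVec _ _).trans <|
        mul_le_mul_of_nonneg_left norm_rowDist_one_le_two (norm_nonneg _)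
    _ = 2 * ‖residualQ P ^ n‖ := mul_comm _ _

end Coupling

theorem tv_le_specRad_add_eps_pow_general
    (P : S → S → ℝ) (hP1 : ∀ x, ∑ y, P x y = 1) :
    ∀ ε : ℝ, 0 < ε → ∃ N : ℕ, ∀ n : ℕ, N ≤ n →
      ∀ μ ν : S → ℝ, (∀ x, 0 ≤ μ x) → (∀ x, 0 ≤ ν x) →
        (∑ x, μ x = 1) → (∑ x, ν x = 1) →
        ∑ x, |((fun v y => ∑ x, v x * P x y)^[n] μ) x -
              ((fun v y => ∑ x, v x * P x y)^[n] ν) x|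
          ≤ (specRad (residualQ P) + ε) ^ n * ∑ x, |μ x - ν x| := by
  intro ε hε
  obtain ⟨N, hN⟩ := eventually_atTop.1 (eventually_norm_pow_le_specRad_add (residualQ P) hε)
  refine ⟨N, fun n hn μ ν _ _ hμ hν => ?_⟩
  change ∑ x, |((fun v => v ᵥ* of P)^[n] μ) x - ((fun v => v ᵥ* of P)^[n] ν) x| ≤ _
  rw [iterate_vecMul, iterate_vecMul]
  simp_rw [← Pi.sub_apply (μ ᵥ* _), ← sub_vecMul]
  exact sum_abs_vecMul_le_of_sum_eq_zero _ (by simp [sum_sub_distrib, hμ, hν])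
    fun p => (rowDist_pow_le hP1 n p).trans (by gcongr; exact hN n hn)

/-- Theorem 1 (asymptotic form): for any `ε > 0`, eventually in `n` the total variation
distance between `μ Pⁿ` and `ν Pⁿ` contracts geometrically at rate `r(Q) + ε`. -/
theorem tv_le_specRad_add_eps_pow [Nonempty S]
    (P : S → S → ℝ) (hP0 : ∀ x y, 0 ≤ P x y) (hP1 : ∀ x, ∑ y, P x y = 1) :
    ∀ ε : ℝ, 0 < ε → ∃ N : ℕ, ∀ n : ℕ, N ≤ n →
      ∀ μ ν : S → ℝ, (∀ x, 0 ≤ μ x) → (∀ x, 0 ≤ ν x) →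
        (∑ x, μ x = 1) → (∑ x, ν x = 1) →
        ∑ x, |((fun v y => ∑ x, v x * P x y)^[n] μ) x -
              ((fun v y => ∑ x, v x * P x y)^[n] ν) x|
          ≤ (specRad (residualQ P) + ε) ^ n * ∑ x, |μ x - ν x| :=
  tv_le_specRad_add_eps_pow_general P hP1
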